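/- For s ∈ ℂ let u_s : ℍ → ℂ be defined by u_s(z) = (Im(z)/|z|)^s = exp(s·log(Im(z)/|z|)) (the base being a positive real number). Then for every z = x+iy ∈ ℍ, y²·(∂²u_s/∂x² + ∂²u_s/∂y²)(z) + s(1−s)·u_s(z) = −s²·u_{s+2}(z); that is, (Δ + s(1−s))(Im(z)/|z|)^s = −s²(Im(z)/|z|)^{s+2}, where Δ = y²(∂²/∂x² + ∂²/∂y²) is the hyperbolic Laplacian. -/

import Mathlib

/-!
Write `u_s = exp (s L)` with `L = log y - ½ log (x² + y²)`. For any real `L`,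
`∂²(e^{sL}) = e^{sL} (s² (∂L)² + s ∂²L)`, so the Euclidean Laplacian of `u_s` is
`u_s (s² |∇L|² + s Δ_E L)`. Here `log (x² + y²)` is harmonic, so `Δ_E L = -1/y²`, and
`|∇L|² = 1/y² - 1/(x² + y²)`. Multiplying by `y²` gives `Δ u_s = (s² - s) u_s - s² y²/(x² + y²) u_s`,
and `y²/(x² + y²) u_s = u_{s+2}`.
-/

open Complex

noncomputable section

/-- `u_s(x + iy) = (y/|x+iy|)^s`, as a function of the two real variables `x, y`. -/
def uHyp (s : ℂ) (x y : ℝ) : ℂ :=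
  (((y / Real.sqrt (x ^ 2 + y ^ 2)) : ℝ) : ℂ) ^ s

open Filter Topology

theorem deriv_deriv_cexp_mul_ofReal (s : ℂ) {g : ℝ → ℂ} {f f' : ℝ → ℝ} {f'' t : ℝ}
    (hg : g =ᶠ[𝓝 t] fun τ => cexp (s * f τ))
    (hf : ∀ᶠ τ in 𝓝 t, HasDerivAt f (f' τ) τ) (hf' : HasDerivAt f' f'' t) :
    deriv (deriv g) t = cexp (s * f t) * (s ^ 2 * f' t ^ 2 + s * f'') := by
  have hg' : deriv g =ᶠ[𝓝 t] fun τ => cexp (s * f τ) * (s * f' τ) := by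
    filter_upwards [hg.eventuallyEq_nhds, hf] with τ hgτ hfτ
    rw [hgτ.deriv_eq]
    exact (hfτ.ofReal_comp.const_mul s).cexp.deriv
  have hexp := (hf.self_of_nhds.ofReal_comp.const_mul s).cexp
  rw [hg'.deriv_eq]
  exact (hexp.mul (hf'.ofReal_comp.const_mul s)).deriv.trans (by ring)

theorem hasDerivAt_log_sq_add {c t : ℝ} (h : t ^ 2 + c ≠ 0) :
    HasDerivAt (fun τ => Real.log (τ ^ 2 + c)) (2 * t / (t ^ 2 + c)) t := by
  simpa using ((hasDerivAt_pow 2 t).add_const c).log h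

theorem hasDerivAt_two_mul_div_sq_add {c t : ℝ} (h : t ^ 2 + c ≠ 0) :
    HasDerivAt (fun τ => 2 * τ / (τ ^ 2 + c)) (2 * (c - t ^ 2) / (t ^ 2 + c) ^ 2) t := by
  have hnum : HasDerivAt (fun τ : ℝ => 2 * τ) 2 t := by simpa using (hasDerivAt_id t).const_mul 2
  have hden : HasDerivAt (fun τ : ℝ => τ ^ 2 + c) (2 * t) t := by
    simpa using (hasDerivAt_pow 2 t).add_const c
  exact (hnum.fun_div hden h).congr_deriv (by ring)

theorem uHyp_eq_cexp (s : ℂ) (x : ℝ) {y : ℝ} (hy : 0 < y) :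
    uHyp s x y = cexp (s * ↑(Real.log y - Real.log (x ^ 2 + y ^ 2) / 2)) := by
  have hr : 0 < x ^ 2 + y ^ 2 := by positivity
  have hq : 0 < y / Real.sqrt (x ^ 2 + y ^ 2) := div_pos hy (Real.sqrt_pos.mpr hr)
  rw [uHyp, cpow_def_of_ne_zero (ofReal_ne_zero.mpr hq.ne'), ← ofReal_log hq.le,
    Real.log_div hy.ne' (Real.sqrt_pos.mpr hr).ne', Real.log_sqrt hr.le, mul_comm]

theorem uHyp_add_two (s : ℂ) (x : ℝ) {y : ℝ} (hy : 0 < y) :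
    uHyp (s + 2) x y = uHyp s x y * ↑(y ^ 2 / (x ^ 2 + y ^ 2)) := by
  have hr : 0 < x ^ 2 + y ^ 2 := by positivity
  have hq : 0 < y / Real.sqrt (x ^ 2 + y ^ 2) := div_pos hy (Real.sqrt_pos.mpr hr)
  rw [uHyp, uHyp, cpow_add _ _ (ofReal_ne_zero.mpr hq.ne'), cpow_two, ← ofReal_pow, div_pow,
    Real.sq_sqrt hr.le]

theorem deriv_deriv_uHyp_x (s : ℂ) (x : ℝ) {y : ℝ} (hy : 0 < y) :
    deriv (deriv fun x' => uHyp s x' y) x = uHyp s x y *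
      (s ^ 2 * (x / (x ^ 2 + y ^ 2)) ^ 2 + s * ((x ^ 2 - y ^ 2) / (x ^ 2 + y ^ 2) ^ 2)) := by
  have hr : ∀ τ : ℝ, τ ^ 2 + y ^ 2 ≠ 0 := fun τ => by positivity
  rw [uHyp_eq_cexp s x hy, deriv_deriv_cexp_mul_ofReal s
    (f := fun τ => Real.log y - Real.log (τ ^ 2 + y ^ 2) / 2)
    (f' := fun τ => -(2 * τ / (τ ^ 2 + y ^ 2) / 2))
    (.of_forall fun τ => uHyp_eq_cexp s τ hy)
    (.of_forall fun τ => ((hasDerivAt_log_sq_add (hr τ)).div_const 2).const_sub _)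
    ((hasDerivAt_two_mul_div_sq_add (hr x)).div_const 2).neg]
  congr 1
  push_cast
  field_simp
  ring

theorem deriv_deriv_uHyp_y (s : ℂ) (x : ℝ) {y : ℝ} (hy : 0 < y) :
    deriv (deriv fun y' => uHyp s x y') y = uHyp s x y *
      (s ^ 2 * (1 / y - y / (x ^ 2 + y ^ 2)) ^ 2
        + s * (-1 / y ^ 2 + (y ^ 2 - x ^ 2) / (x ^ 2 + y ^ 2) ^ 2)) := by
  have hr : ∀ τ : ℝ, 0 < τ → τ ^ 2 + x ^ 2 ≠ 0 := fun τ hτ => by positivity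
  have hu : (fun y' => uHyp s x y') =ᶠ[𝓝 y]
      fun τ => cexp (s * ↑(Real.log τ - Real.log (τ ^ 2 + x ^ 2) / 2)) := by
    filter_upwards [eventually_gt_nhds hy] with τ hτ
    rw [uHyp_eq_cexp s x hτ, add_comm (x ^ 2)]
  have hL : ∀ᶠ τ in 𝓝 y, HasDerivAt (fun τ => Real.log τ - Real.log (τ ^ 2 + x ^ 2) / 2)
      (τ⁻¹ - 2 * τ / (τ ^ 2 + x ^ 2) / 2) τ := by
    filter_upwards [eventually_gt_nhds hy] with τ hτ
    exact (Real.hasDerivAt_log hτ.ne').sub ((hasDerivAt_log_sq_add (hr τ hτ)).div_const 2)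
  rw [deriv_deriv_cexp_mul_ofReal s hu hL
    ((hasDerivAt_inv hy.ne').sub ((hasDerivAt_two_mul_div_sq_add (hr y hy)).div_const 2)),
    uHyp_eq_cexp s x hy, add_comm (y ^ 2)]
  congr 1
  push_cast
  field_simp
  ring

/-- `(Δ + s(1-s)) (Im z/|z|)^s = -s² (Im z/|z|)^{s+2}`, where
`Δ = y²(∂²/∂x² + ∂²/∂y²)` is the hyperbolic Laplacian. -/
theorem statement13 (s : ℂ) (x y : ℝ) (hy : 0 < y) :
    ((y : ℂ)) ^ 2 *
        (deriv (fun x' : ℝ => deriv (fun x'' : ℝ => uHyp s x'' y) x') x +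
         deriv (fun y' : ℝ => deriv (fun y'' : ℝ => uHyp s x y'') y') y) +
      s * (1 - s) * uHyp s x y =
    -s ^ 2 * uHyp (s + 2) x y := by
  have hr : (x : ℂ) ^ 2 + (y : ℂ) ^ 2 ≠ 0 := by exact_mod_cast (by positivity : x ^ 2 + y ^ 2 ≠ 0)
  have hy' : (y : ℂ) ≠ 0 := ofReal_ne_zero.mpr hy.ne'
  rw [deriv_deriv_uHyp_x s x hy, deriv_deriv_uHyp_y s x hy, uHyp_add_two s x hy]
  push_cast
  field_simp
  ring
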